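/- Let w ∈ ℤ_{≥1}^n and let J be a nonempty finite set of positive integers; for each i ∈ J let r_i ≥ 1 and let f_{ij} ∈ ℂ[x_1,…,x_n] (1 ≤ j ≤ r_i) be nonconstant with deg_w(f_{ij}) = i; set r = Σ r_i. Let F_{ijw} be the w-weighted homogeneous part of f_{ij} of w-degree i, and assume the family {F_{ijw} : i ∈ J, 1 ≤ j ≤ r_i} is linearly independent over ℂ. Let a = (a_{ij}) ∈ ℂ^r ∖ {0}, let g_a = Σ_{i,j} a_{ij} f_{ij}, let ℓ = deg_w(g_a), and let g̃_{a,w} be the w-weighted homogeneous part of g_a of w-degree ℓ. Then ℓ ∈ J, and the common zero locus in ℂ^n of the partial derivatives ∂g̃_{a,w}/∂x_1, …, ∂g̃_{a,w}/∂x_n has dimension at most s_{wℓ} := dim BSing(F_{ℓ1w},…,F_{ℓ r_ℓ w}). -/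

import Mathlib

open MvPolynomial

/-- The vanishing ideal of a subset `S ⊆ K^σ` inside the polynomial ring. -/
def vIdeal {σ : Type} {K : Type} [CommRing K] (S : Set (σ → K)) :
    Ideal (MvPolynomial σ K) where
  carrier := {f | ∀ x ∈ S, MvPolynomial.eval x f = 0}
  add_mem' := by
    intro a b ha hb x hx
    simp [ha x hx, hb x hx]
  zero_mem' := by
    intro x hx
    simp
  smul_mem' := by
    intro c a ha x hx
    simp [smul_eq_mul, ha x hx]

-- Dimension of a subset `S ⊆ K^σ`: the Krull dimension of `K[x]/I(S)`, with `dim ∅ = -1`.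
open Classical in
noncomputable def zdim {σ : Type} {K : Type} [CommRing K] (S : Set (σ → K)) : ℤ :=
  if S = ∅ then -1
  else (ENat.toNat (WithBot.unbotD 0 (ringKrullDim (MvPolynomial σ K ⧸ vIdeal S))) : ℤ)

/-- The Birch singular locus of a family of polynomials: points where the Jacobian
matrix has rank `< s`. -/
noncomputable def BSing {n s : ℕ} {K : Type} [CommRing K]
    (G : Fin s → MvPolynomial (Fin n) K) : Set (Fin n → K) :=
  {x | (Matrix.of fun (i : Fin s) (j : Fin n) =>
      MvPolynomial.eval x (MvPolynomial.pderiv j (G i))).rank < s}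

/-! Split `g_a` into the blocks `∑ⱼ a_{ij} f_{ij}` and let `ℓ` be the largest `i` with
`a_i ≠ 0`. Blocks with `i < ℓ` have no `w`-degree-`ℓ` part, so the degree-`ℓ` component of `g_a`
is `∑ⱼ a_{ℓj} F_{ℓjw}`, which is nonzero by linear independence; hence `deg_w g_a = ℓ`. At a common
zero of the partials of this component the nonzero vector `(a_{ℓj})ⱼ` lies in the left kernel of
the Jacobian matrix of the `F_{ℓjw}`, so the point lies in `BSing`. Finally `zdim` is monotone:
this needs the Krull dimension of `K[x₁,…,xₙ]` to be finite, since `ENat.toNat ⊤ = 0`. -/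

namespace MvPolynomial

theorem weightedTotalDegree_sum_le {σ R ι : Type*} [CommSemiring R] (w : σ → ℕ)
    (s : Finset ι) (p : ι → MvPolynomial σ R) {m : ℕ}
    (h : ∀ k ∈ s, weightedTotalDegree w (p k) ≤ m) :
    weightedTotalDegree w (∑ k ∈ s, p k) ≤ m := by
  classical
  refine Finset.sup_le fun d hd => ?_
  obtain ⟨k, hk, hdk⟩ := Finset.mem_biUnion.mp (support_sum hd)
  exact (le_weightedTotalDegree w hdk).trans (h k hk)

theorem weightedTotalDegree_C_mul_le {σ R : Type*} [CommSemiring R] (w : σ → ℕ) (c : R)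
    (p : MvPolynomial σ R) : weightedTotalDegree w (C c * p) ≤ weightedTotalDegree w p := by
  rw [C_mul']
  exact Finset.sup_mono support_smul

theorem weightedTotalDegree_eq_of_weightedHomogeneousComponent_ne_zero {σ R : Type*}
    [CommSemiring R] {w : σ → ℕ} {p : MvPolynomial σ R} {m : ℕ}
    (hle : weightedTotalDegree w p ≤ m) (hm : weightedHomogeneousComponent w m p ≠ 0) :
    weightedTotalDegree w p = m :=
  hle.antisymm <| not_lt.mp fun hlt => hm (weightedHomogeneousComponent_eq_zero m p hlt)

end MvPolynomial

open Matrix in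
theorem Matrix.rank_lt_card_height_of_vecMul_eq_zero {m n K : Type*} [Field K] [Fintype m]
    [Fintype n] (A : Matrix m n K) {c : m → K} (hc : c ≠ 0) (h : c ᵥ* A = 0) :
    A.rank < Fintype.card m := by
  refine (Matrix.rank_le_card_height A).lt_of_ne fun heq => hc ?_
  have hli : LinearIndependent K A.row := by
    rw [linearIndependent_iff_card_eq_finrank_span, Set.finrank, ← A.rank_eq_finrank_span_row, heq]
  funext i
  refine Fintype.linearIndependent_iff.mp hli c ?_ i
  rw [← h]
  ext u
  simp [Matrix.vecMul, dotProduct, Matrix.row, Finset.sum_apply]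

theorem ringKrullDim_quotient_mvPolynomial_ne_top {σ K : Type*} [Finite σ] [Field K]
    (I : Ideal (MvPolynomial σ K)) : ringKrullDim (MvPolynomial σ K ⧸ I) ≠ ⊤ := by
  refine ne_top_of_le_ne_top ?_ (ringKrullDim_quotient_le I)
  rw [MvPolynomial.ringKrullDim_of_isNoetherianRing, ringKrullDim_eq_zero_of_field, zero_add]
  exact WithBot.coe_injective.ne (ENat.natCast_ne_top _)

theorem ENat.toNat_unbotD_mono {a b : WithBot ℕ∞} (h : a ≤ b) (hb : b ≠ ⊤) :
    (a.unbotD 0).toNat ≤ (b.unbotD 0).toNat := by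
  cases a with
  | bot => simp
  | coe a =>
    cases b with
    | bot => simp at h
    | coe b =>
      simp only [WithBot.unbotD_coe]
      exact ENat.toNat_le_toNat (WithBot.coe_le_coe.mp h) (by simpa using hb)

theorem vIdeal_antitone {σ K : Type} [CommRing K] {S T : Set (σ → K)} (h : S ⊆ T) :
    vIdeal T ≤ vIdeal S :=
  fun _ hp x hx => hp x (h hx)

theorem neg_one_le_zdim {σ K : Type} [CommRing K] (S : Set (σ → K)) : -1 ≤ zdim S := by
  unfold zdim
  split_ifs <;> omega

theorem zdim_mono {σ K : Type} [Finite σ] [Field K] {S T : Set (σ → K)} (h : S ⊆ T) :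
    zdim S ≤ zdim T := by
  rcases S.eq_empty_or_nonempty with rfl | hS
  · rw [zdim, if_pos rfl]
    exact neg_one_le_zdim T
  rw [zdim, zdim, if_neg hS.ne_empty, if_neg (hS.mono h).ne_empty, Nat.cast_le]
  exact ENat.toNat_unbotD_mono
    (ringKrullDim_le_of_surjective _ (Ideal.Quotient.factor_surjective (vIdeal_antitone h)))
    (ringKrullDim_quotient_mvPolynomial_ne_top _)

open Matrix in
theorem pderiv_linearCombination_zeroLocus_subset_BSing {n s : ℕ} {K : Type} [Field K]
    (F : Fin s → MvPolynomial (Fin n) K) {c : Fin s → K} (hc : c ≠ 0) :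
    {x | ∀ u, eval x (pderiv u (∑ j, C (c j) * F j)) = 0} ⊆ BSing F := by
  intro x hx
  simpa [BSing] using Matrix.rank_lt_card_height_of_vecMul_eq_zero _ hc <| funext fun u => by
    simpa [vecMul, dotProduct] using hx u

section BlockSum

variable {σ K : Type*} [CommRing K] {w : σ → ℕ} {J : Finset ℕ} {r : ℕ → ℕ}
  {f : (i : ℕ) → Fin (r i) → MvPolynomial σ K} {a : (i : J) → Fin (r i.1) → K} {i₀ : J}

theorem weightedTotalDegree_blockSum_le (hfd : ∀ i ∈ J, ∀ j, weightedTotalDegree w (f i j) = i)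
    (hmax : ∀ i : J, a i ≠ 0 → i.1 ≤ i₀.1) :
    weightedTotalDegree w (∑ i : J, ∑ j : Fin (r i.1), C (a i j) * f i.1 j) ≤ i₀.1 := by
  refine weightedTotalDegree_sum_le w _ _ fun i _ => weightedTotalDegree_sum_le w _ _ fun j _ => ?_
  by_cases hij : a i j = 0
  · simp [hij, weightedTotalDegree_zero]
  calc weightedTotalDegree w (C (a i j) * f i.1 j) ≤ weightedTotalDegree w (f i.1 j) :=
        weightedTotalDegree_C_mul_le w _ _
    _ = i.1 := hfd i.1 i.2 j
    _ ≤ i₀.1 := hmax i fun hi => hij (congrFun hi j)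

theorem weightedHomogeneousComponent_blockSum
    (hfd : ∀ i ∈ J, ∀ j, weightedTotalDegree w (f i j) = i)
    (hmax : ∀ i : J, a i ≠ 0 → i.1 ≤ i₀.1) :
    weightedHomogeneousComponent w i₀.1 (∑ i : J, ∑ j : Fin (r i.1), C (a i j) * f i.1 j) =
      ∑ j, C (a i₀ j) * weightedHomogeneousComponent w i₀.1 (f i₀.1 j) := by
  simp only [map_sum, weightedHomogeneousComponent_C_mul]
  refine Finset.sum_eq_single i₀ (fun i _ hi => Finset.sum_eq_zero fun j _ => ?_) (by simp)
  by_cases hai : a i = 0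
  · simp [hai]
  have hlt : weightedTotalDegree w (f i.1 j) < i₀.1 :=
    (hfd i.1 i.2 j).trans_lt ((hmax i hai).lt_of_ne (Subtype.coe_injective.ne hi))
  rw [weightedHomogeneousComponent_eq_zero _ _ hlt, mul_zero]

theorem weightedHomogeneousComponent_blockSum_ne_zero
    (hlin : LinearIndependent K fun q : Σ i : J, Fin (r i.1) =>
      weightedHomogeneousComponent w q.1.1 (f q.1.1 q.2))
    (ha : a i₀ ≠ 0) :
    ∑ j, C (a i₀ j) * weightedHomogeneousComponent w i₀.1 (f i₀.1 j) ≠ 0 := by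
  intro h
  refine ha (funext <| Fintype.linearIndependent_iff.mp
    (hlin.comp (Sigma.mk i₀) sigma_mk_injective) (a i₀) ?_)
  simpa [C_mul'] using h

end BlockSum

theorem stmt17_general (n : ℕ) (w : Fin n → ℕ) (J : Finset ℕ) (r : ℕ → ℕ)
    (f : (i : ℕ) → Fin (r i) → MvPolynomial (Fin n) ℂ)
    (hfd : ∀ i ∈ J, ∀ j, MvPolynomial.weightedTotalDegree w (f i j) = i)
    (hlin : LinearIndependent ℂ fun q : Σ i : ↥J, Fin (r i.1) =>
      MvPolynomial.weightedHomogeneousComponent w q.1.1 (f q.1.1 q.2))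
    (a : (i : ↥J) → Fin (r i.1) → ℂ) (ha : a ≠ 0) :
    MvPolynomial.weightedTotalDegree w
        (∑ i : ↥J, ∑ j : Fin (r i.1), MvPolynomial.C (a i j) * f i.1 j) ∈ J ∧
    zdim {x : Fin n → ℂ | ∀ u : Fin n,
        MvPolynomial.eval x (MvPolynomial.pderiv u
          (MvPolynomial.weightedHomogeneousComponent w
            (MvPolynomial.weightedTotalDegree w
              (∑ i : ↥J, ∑ j : Fin (r i.1), MvPolynomial.C (a i j) * f i.1 j))
            (∑ i : ↥J, ∑ j : Fin (r i.1), MvPolynomial.C (a i j) * f i.1 j))) = 0} ≤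
    zdim (BSing fun j : Fin (r (MvPolynomial.weightedTotalDegree w
        (∑ i : ↥J, ∑ j : Fin (r i.1), MvPolynomial.C (a i j) * f i.1 j))) =>
      MvPolynomial.weightedHomogeneousComponent w
        (MvPolynomial.weightedTotalDegree w
          (∑ i : ↥J, ∑ j : Fin (r i.1), MvPolynomial.C (a i j) * f i.1 j))
        (f (MvPolynomial.weightedTotalDegree w
          (∑ i : ↥J, ∑ j : Fin (r i.1), MvPolynomial.C (a i j) * f i.1 j)) j)) := by
  obtain ⟨i₀, ha₀, hmax⟩ : ∃ i₀ : J, a i₀ ≠ 0 ∧ ∀ i : J, a i ≠ 0 → i.1 ≤ i₀.1 := by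
    obtain ⟨i, hi⟩ := Function.ne_iff.mp ha
    obtain ⟨i₀, hi₀, hmax⟩ := Finset.exists_max_image {i | a i ≠ 0} (fun i : J => i.1)
      ⟨i, by simpa using hi⟩
    exact ⟨i₀, by simpa using hi₀, fun i hi => hmax i (by simpa using hi)⟩
  have htop := weightedHomogeneousComponent_blockSum hfd hmax
  have hdeg := weightedTotalDegree_eq_of_weightedHomogeneousComponent_ne_zero
    (weightedTotalDegree_blockSum_le hfd hmax)
    (htop ▸ weightedHomogeneousComponent_blockSum_ne_zero hlin ha₀)
  rw [hdeg, htop]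
  exact ⟨i₀.2, zdim_mono (pderiv_linearCombination_zeroLocus_subset_BSing _ ha₀)⟩

/-- Lemma `singlocus`. For `a ≠ 0`, if `ℓ = deg_w(g_a)` then `ℓ ∈ J` and
the singular locus of the top `w`-weighted part of `g_a` has dimension at most `s_{wℓ}`. -/
theorem stmt17 (n : ℕ) (w : Fin n → ℕ) (hw : ∀ u, 1 ≤ w u)
    (J : Finset ℕ) (hJ : J.Nonempty) (hJ1 : ∀ i ∈ J, 1 ≤ i)
    (r : ℕ → ℕ) (hr : ∀ i ∈ J, 1 ≤ r i)
    (f : (i : ℕ) → Fin (r i) → MvPolynomial (Fin n) ℂ)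
    (hfc : ∀ i ∈ J, ∀ j, (f i j).totalDegree ≠ 0)
    (hfd : ∀ i ∈ J, ∀ j, MvPolynomial.weightedTotalDegree w (f i j) = i)
    (hlin : LinearIndependent ℂ fun q : Σ i : ↥J, Fin (r i.1) =>
      MvPolynomial.weightedHomogeneousComponent w q.1.1 (f q.1.1 q.2))
    (a : (i : ↥J) → Fin (r i.1) → ℂ) (ha : a ≠ 0) :
    MvPolynomial.weightedTotalDegree w
        (∑ i : ↥J, ∑ j : Fin (r i.1), MvPolynomial.C (a i j) * f i.1 j) ∈ J ∧
    zdim {x : Fin n → ℂ | ∀ u : Fin n,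
        MvPolynomial.eval x (MvPolynomial.pderiv u
          (MvPolynomial.weightedHomogeneousComponent w
            (MvPolynomial.weightedTotalDegree w
              (∑ i : ↥J, ∑ j : Fin (r i.1), MvPolynomial.C (a i j) * f i.1 j))
            (∑ i : ↥J, ∑ j : Fin (r i.1), MvPolynomial.C (a i j) * f i.1 j))) = 0} ≤
    zdim (BSing fun j : Fin (r (MvPolynomial.weightedTotalDegree w
        (∑ i : ↥J, ∑ j : Fin (r i.1), MvPolynomial.C (a i j) * f i.1 j))) =>
      MvPolynomial.weightedHomogeneousComponent w
        (MvPolynomial.weightedTotalDegree w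
          (∑ i : ↥J, ∑ j : Fin (r i.1), MvPolynomial.C (a i j) * f i.1 j))
        (f (MvPolynomial.weightedTotalDegree w
          (∑ i : ↥J, ∑ j : Fin (r i.1), MvPolynomial.C (a i j) * f i.1 j)) j)) :=
  stmt17_general n w J r f hfd hlin a ha
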